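/- arXiv:1612.03535 — 2 statements merged into one kernel-verified Lean document; each statement's English description precedes it below -/
import Mathlib

section
/- Assume ℓ < 1. Then for every x ∈ X_{0,1} there exists exactly one t ∈ ℝ such that p(ψ_t(x)) = 1/2; that is, every flow orbit contained in X_{0,1} intersects the level set p^{-1}(1/2) in exactly one point. -/
open Filter Topology

/-- The set `X_{i,j}` of points whose `g`-value along the flow tends to `i`
as `t → -∞` and to `j` as `t → +∞`. -/
def Xset {M : Type*} (ψ : ℝ → M → M) (g : M → ℝ) (i j : ℝ) : Set M :=
  {x | Tendsto (fun t => g (ψ t x)) atBot (nhds i) ∧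
       Tendsto (fun t => g (ψ t x)) atTop (nhds j)}

/-- The Fuller average `g_n(x) = (1/(2n)) ∫_{-n}^{n} g(ψ_t(x)) dt`. -/
noncomputable def gAvg {M : Type*} (ψ : ℝ → M → M) (g : M → ℝ) (n : ℕ) (x : M) : ℝ :=
  (1 / (2 * (n : ℝ))) * ∫ t in (-(n : ℝ))..(n : ℝ), g (ψ t x)

/-- The function `p(x) = Σ_{n=1}^∞ 2^{-n} g_n(x)`. -/
noncomputable def pFun {M : Type*} (ψ : ℝ → M → M) (g : M → ℝ) (x : M) : ℝ :=
  ∑' n : ℕ, (1 / 2 : ℝ) ^ (n + 1) * gAvg ψ g (n + 1) x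

/-- The set `U_{0,0}` of points of `X_{0,0}` whose orbit is not entirely at `g`-value 0. -/
def U00 {M : Type*} (ψ : ℝ → M → M) (g : M → ℝ) : Set M :=
  {x ∈ Xset ψ g 0 0 | ∃ t : ℝ, g (ψ t x) ≠ 0}

/-- The set `U_{1,1}` of points of `X_{1,1}` whose orbit is not entirely at `g`-value 1. -/
def U11 {M : Type*} (ψ : ℝ → M → M) (g : M → ℝ) : Set M :=
  {x ∈ Xset ψ g 1 1 | ∃ t : ℝ, g (ψ t x) ≠ 1}

/-! Along the orbit of `x`, write `h t = g (ψ t x)`. Pick `c` with `h c = 1/2`; the gate at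
`ψ c x` forces `h ∈ {0, 1}` off `[c - ℓ, c + ℓ]`, and by connectedness and the limits at `∓∞`,
`h = 0` before and `h = 1` after that interval. Now `s ↦ p (ψ s x)` is a weighted sum of the
averages of `h` over the windows `[s - n, s + n]`, `n ≥ 1`. Since `2n > 2ℓ`, shifting a window by
its width never decreases `h`, so every average is nondecreasing in `s`, and the averages over
windows wider than the transition are strictly increasing. Hence `p` is continuous and strictly
increasing along the orbit, is `≤ 1/2` far to the left and `≥ 1/2` far to the right, and takes
the value `1/2` exactly once. -/

open MeasureTheory Set

noncomputable def windowAvg (h : ℝ → ℝ) (r s : ℝ) : ℝ :=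
  (1 / (2 * r)) * ∫ u in (s - r)..(s + r), h u

section WindowAvg

variable {h : ℝ → ℝ}

lemma windowAvg_eq_integral_comp_add (h : ℝ → ℝ) (r s : ℝ) :
    windowAvg h r s = (1 / (2 * r)) * ∫ t in (-r)..r, h (t + s) := by
  rw [windowAvg, intervalIntegral.integral_comp_add_right, neg_add_eq_sub, add_comm r]

lemma continuous_windowAvg (hc : Continuous h) (r : ℝ) : Continuous (windowAvg h r) := by
  simp only [funext (windowAvg_eq_integral_comp_add h r)]
  exact continuous_const.mul
    (intervalIntegral.continuous_parametric_intervalIntegral_of_continuous'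
      (f := fun s t => h (t + s)) (by fun_prop) _ _)

lemma windowAvg_mem_Icc (hc : Continuous h) (h01 : ∀ t, h t ∈ Icc 0 1) {r : ℝ} (hr : 0 < r)
    (s : ℝ) : windowAvg h r s ∈ Icc 0 1 := by
  have hlen : s - r ≤ s + r := by linarith
  have hle : ∫ u in (s - r)..(s + r), h u ≤ 2 * r := by
    calc ∫ u in (s - r)..(s + r), h u ≤ ∫ _ in (s - r)..(s + r), (1 : ℝ) :=
          intervalIntegral.integral_mono_on hlen (hc.intervalIntegrable _ _)
            intervalIntegrable_const fun u _ => (h01 u).2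
      _ = 2 * r := by rw [intervalIntegral.integral_const, smul_eq_mul, mul_one]; ring
  refine ⟨mul_nonneg (by positivity)
    (intervalIntegral.integral_nonneg hlen fun u _ => (h01 u).1), ?_⟩
  rw [windowAvg, one_div_mul_eq_div, div_le_one (by positivity)]
  exact hle

lemma intervalIntegral_eq_mul_of_forall_eq {a b C : ℝ} (hab : a ≤ b) (hC : ∀ u ∈ Icc a b, h u = C) :
    ∫ u in a..b, h u = (b - a) * C := by
  rw [intervalIntegral.integral_congr (g := fun _ => C)
    (fun u hu => hC u (by rwa [uIcc_of_le hab] at hu)), intervalIntegral.integral_const,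
    smul_eq_mul]

lemma windowAvg_eq_of_forall_eq {C r s : ℝ} (hr : 0 < r)
    (hC : ∀ u ∈ Icc (s - r) (s + r), h u = C) : windowAvg h r s = C := by
  rw [windowAvg, intervalIntegral_eq_mul_of_forall_eq (by linarith) hC]
  field_simp
  ring

lemma windowAvg_sub_windowAvg (hc : Continuous h) (r s₁ s₂ : ℝ) :
    windowAvg h r s₂ - windowAvg h r s₁ = (1 / (2 * r)) *
      ((∫ u in (s₁ + r)..(s₂ + r), h u) - ∫ u in (s₁ - r)..(s₂ - r), h u) := by
  rw [windowAvg, windowAvg, ← mul_sub,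
    intervalIntegral.integral_interval_sub_interval_comm' (hc.intervalIntegrable _ _)
      (hc.intervalIntegrable _ _) (hc.intervalIntegrable _ _)]

lemma windowAvg_monotone (hc : Continuous h) {r : ℝ} (hr : 0 ≤ r)
    (hshift : ∀ u, h u ≤ h (u + 2 * r)) : Monotone (windowAvg h r) := by
  intro s₁ s₂ hs
  have hlag : ∫ u in (s₁ - r)..(s₂ - r), h u ≤ ∫ u in (s₁ + r)..(s₂ + r), h u := by
    have hshifted := intervalIntegral.integral_comp_sub_right h (2 * r) (a := s₁ + r) (b := s₂ + r)
    rw [show s₁ + r - 2 * r = s₁ - r by ring, show s₂ + r - 2 * r = s₂ - r by ring] at hshifted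
    rw [← hshifted]
    exact intervalIntegral.integral_mono_on (by linarith)
      ((hc.comp (continuous_sub_right _)).intervalIntegrable _ _) (hc.intervalIntegrable _ _)
      fun u _ => by simpa using hshift (u - 2 * r)
  rw [← sub_nonneg, windowAvg_sub_windowAvg hc]
  exact mul_nonneg (by positivity) (sub_nonneg.2 hlag)

lemma windowAvg_lt_windowAvg_of_step (hc : Continuous h) {a b r s₁ s₂ : ℝ}
    (hlow : ∀ t < a, h t = 0) (hhigh : ∀ t > b, h t = 1) (hr : 0 < r) (hs : s₁ < s₂)
    (hb : b < s₁ + r) (ha : s₂ - r < a) : windowAvg h r s₁ < windowAvg h r s₂ := by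
  have hlead : ∫ u in (s₁ + r)..(s₂ + r), h u = s₂ - s₁ := by
    rw [intervalIntegral_eq_mul_of_forall_eq (by linarith) fun u hu => hhigh u (by linarith [hu.1])]
    ring
  have hlag : ∫ u in (s₁ - r)..(s₂ - r), h u = 0 := by
    rw [intervalIntegral_eq_mul_of_forall_eq (by linarith) fun u hu => hlow u (by linarith [hu.2])]
    ring
  rw [← sub_pos, windowAvg_sub_windowAvg hc, hlead, hlag]
  exact mul_pos (by positivity) (by linarith)

end WindowAvg

noncomputable def fullerSum (h : ℝ → ℝ) (s : ℝ) : ℝ :=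
  ∑' n : ℕ, (1 / 2 : ℝ) ^ (n + 1) * windowAvg h (n + 1) s

section FullerSum

variable {h : ℝ → ℝ}

lemma fullerSum_term_nonneg (hc : Continuous h) (h01 : ∀ t, h t ∈ Icc 0 1) (n : ℕ) (s : ℝ) :
    0 ≤ (1 / 2 : ℝ) ^ (n + 1) * windowAvg h (n + 1) s :=
  mul_nonneg (by positivity) (windowAvg_mem_Icc hc h01 (by positivity) s).1

lemma fullerSum_term_le (hc : Continuous h) (h01 : ∀ t, h t ∈ Icc 0 1) (n : ℕ) (s : ℝ) :
    (1 / 2 : ℝ) ^ (n + 1) * windowAvg h (n + 1) s ≤ (1 / 2) ^ (n + 1) :=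
  mul_le_of_le_one_right (by positivity) (windowAvg_mem_Icc hc h01 (by positivity) s).2

lemma summable_fullerSum_term (hc : Continuous h) (h01 : ∀ t, h t ∈ Icc 0 1) (s : ℝ) :
    Summable fun n : ℕ => (1 / 2 : ℝ) ^ (n + 1) * windowAvg h (n + 1) s :=
  .of_nonneg_of_le (fullerSum_term_nonneg hc h01 · s) (fullerSum_term_le hc h01 · s)
    ((summable_nat_add_iff 1).2 summable_geometric_two)

lemma continuous_fullerSum (hc : Continuous h) (h01 : ∀ t, h t ∈ Icc 0 1) :
    Continuous (fullerSum h) :=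
  continuous_tsum (fun n => continuous_const.mul (continuous_windowAvg hc _))
    ((summable_nat_add_iff 1).2 summable_geometric_two) fun n s => by
      rw [Real.norm_of_nonneg (fullerSum_term_nonneg hc h01 n s)]
      exact fullerSum_term_le hc h01 n s

lemma half_le_fullerSum (hc : Continuous h) (h01 : ∀ t, h t ∈ Icc 0 1) {s : ℝ}
    (hone : windowAvg h 1 s = 1) : 1 / 2 ≤ fullerSum h s := by
  simpa [fullerSum, hone] using (summable_fullerSum_term hc h01 s).le_tsum 0
    fun n _ => fullerSum_term_nonneg hc h01 n s

lemma fullerSum_le_half (hc : Continuous h) (h01 : ∀ t, h t ∈ Icc 0 1) {s : ℝ}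
    (hzero : windowAvg h 1 s = 0) : fullerSum h s ≤ 1 / 2 := by
  have htail : Summable fun n : ℕ => (1 / 2 : ℝ) ^ (n + 1 + 1) :=
    (summable_nat_add_iff 2).2 summable_geometric_two
  rw [fullerSum, (summable_fullerSum_term hc h01 s).tsum_eq_zero_add]
  calc _ = ∑' n : ℕ, (1 / 2 : ℝ) ^ (n + 1 + 1) * windowAvg h ((n + 1 : ℕ) + 1) s := by
        simp [hzero]
    _ ≤ ∑' n : ℕ, (1 / 2 : ℝ) ^ (n + 1 + 1) :=
        ((summable_nat_add_iff 1).2 (summable_fullerSum_term hc h01 s)).tsum_le_tsum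
          (fun n => fullerSum_term_le hc h01 (n + 1) s) htail
    _ = 1 / 2 := by
        simp only [pow_succ, tsum_mul_right, tsum_geometric_two]
        norm_num

lemma fullerSum_strictMono (hc : Continuous h) (h01 : ∀ t, h t ∈ Icc 0 1) {a b : ℝ}
    (hlow : ∀ t < a, h t = 0) (hhigh : ∀ t > b, h t = 1) (hab : b - a < 2) :
    StrictMono (fullerSum h) := by
  have hshift : ∀ r : ℝ, 1 ≤ r → ∀ u, h u ≤ h (u + 2 * r) := by
    intro r hr u
    by_cases hu : u < a
    · rw [hlow u hu]
      exact (h01 _).1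
    · rw [hhigh (u + 2 * r) (by linarith)]
      exact (h01 u).2
  intro s₁ s₂ hs
  obtain ⟨N, hN⟩ := exists_nat_gt (max (b - s₁) (s₂ - a))
  rw [max_lt_iff] at hN
  refine Summable.tsum_lt_tsum (i := N) (fun n => ?_) ?_ (summable_fullerSum_term hc h01 s₁)
    (summable_fullerSum_term hc h01 s₂)
  · exact mul_le_mul_of_nonneg_left
      (windowAvg_monotone hc (by positivity) (hshift _ (by simp)) hs.le) (by positivity)
  · exact mul_lt_mul_of_pos_left
      (windowAvg_lt_windowAvg_of_step hc hlow hhigh (by positivity) hs (by linarith)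
        (by linarith)) (by positivity)

lemma existsUnique_fullerSum_eq_half (hc : Continuous h) (h01 : ∀ t, h t ∈ Icc 0 1)
    {a b : ℝ} (hlow : ∀ t < a, h t = 0) (hhigh : ∀ t > b, h t = 1) (hab : b - a < 2) :
    ∃! s, fullerSum h s = 1 / 2 := by
  have hleft : fullerSum h (a - 2) ≤ 1 / 2 := fullerSum_le_half hc h01
    (windowAvg_eq_of_forall_eq one_pos fun u hu => hlow u (by linarith [hu.2]))
  have hright : 1 / 2 ≤ fullerSum h (b + 2) := half_le_fullerSum hc h01
    (windowAvg_eq_of_forall_eq one_pos fun u hu => hhigh u (by linarith [hu.1]))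
  obtain ⟨s, hs⟩ := mem_range_of_exists_le_of_exists_ge (continuous_fullerSum hc h01)
    ⟨_, hleft⟩ ⟨_, hright⟩
  exact ⟨s, hs, fun t ht => (fullerSum_strictMono hc h01 hlow hhigh hab).injective
    (ht.trans hs.symm)⟩

end FullerSum

lemma IsPreconnected.eq_of_tendsto_of_mapsTo {α β : Type*} [TopologicalSpace α]
    [TopologicalSpace β] [T2Space β] {S : Set α} (hS : IsPreconnected S) {T : Set β}
    (hT : IsDiscrete T) {f : α → β} (hf : ContinuousOn f S) (hmaps : MapsTo f S T)
    {l : Filter α} [l.NeBot] (hSl : S ∈ l) {y : β} (hlim : Tendsto f l (𝓝 y)) {t : α}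
    (ht : t ∈ S) : f t = y := by
  have hconst : ∀ᶠ u in l, f t = f u :=
    mem_of_superset hSl fun u hu => hS.constant_of_mapsTo hT hf hmaps ht hu
  exact tendsto_nhds_unique (tendsto_const_nhds.congr' hconst) hlim

section Flow

variable {M : Type*} {ψ : ℝ → M → M} {g : M → ℝ}

lemma continuous_comp_orbit [TopologicalSpace M] (hcont : Continuous fun q : ℝ × M => ψ q.1 q.2)
    (hg : Continuous g) (x : M) : Continuous fun t => g (ψ t x) :=
  hg.comp (hcont.comp (continuous_id.prodMk continuous_const))

lemma gAvg_flow_eq_windowAvg (hadd : ∀ s t x, ψ (s + t) x = ψ s (ψ t x)) (n : ℕ) (x : M)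
    (s : ℝ) : gAvg ψ g n (ψ s x) = windowAvg (fun t => g (ψ t x)) n s := by
  simp only [gAvg, windowAvg_eq_integral_comp_add, hadd]

lemma pFun_flow_eq_fullerSum (hadd : ∀ s t x, ψ (s + t) x = ψ s (ψ t x)) (x : M) (s : ℝ) :
    pFun ψ g (ψ s x) = fullerSum (fun t => g (ψ t x)) s := by
  simp only [pFun, fullerSum, gAvg_flow_eq_windowAvg hadd, Nat.cast_succ]

lemma exists_step_of_mem_Xset [TopologicalSpace M] (hcont : Continuous fun q : ℝ × M => ψ q.1 q.2)
    (hadd : ∀ s t x, ψ (s + t) x = ψ s (ψ t x)) (hg : Continuous g) {ℓ : ℝ}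
    (hgate : ∀ x, 0 < g x → g x < 1 → ∀ t : ℝ, ℓ < |t| → g (ψ t x) = 0 ∨ g (ψ t x) = 1)
    {x : M} (hx : x ∈ Xset ψ g 0 1) :
    ∃ c, (∀ t < c - ℓ, g (ψ t x) = 0) ∧ (∀ t > c + ℓ, g (ψ t x) = 1) := by
  have hc := continuous_comp_orbit hcont hg x
  obtain ⟨c, hhalf⟩ : (1 / 2 : ℝ) ∈ range fun t => g (ψ t x) :=
    mem_range_of_exists_le_of_exists_ge hc
      (hx.1.eventually (eventually_le_nhds (by norm_num))).exists
      (hx.2.eventually (eventually_ge_nhds (by norm_num))).exists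
  have hmaps : ∀ t, ℓ < |t - c| → g (ψ t x) ∈ ({0, 1} : Set ℝ) := by
    intro t ht
    simp only at hhalf
    have hgt := hgate (ψ c x) (by rw [hhalf]; norm_num) (by rw [hhalf]; norm_num) (t - c) ht
    rwa [← hadd, sub_add_cancel] at hgt
  refine ⟨c, fun t ht => ?_, fun t ht => ?_⟩
  · exact isPreconnected_Iio.eq_of_tendsto_of_mapsTo ⟨inferInstance⟩ hc.continuousOn
      (fun u hu => hmaps u (lt_abs.2 (.inr (by linarith [mem_Iio.1 hu]))))
      (Iio_mem_atBot _) hx.1 ht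
  · exact isPreconnected_Ioi.eq_of_tendsto_of_mapsTo ⟨inferInstance⟩ hc.continuousOn
      (fun u hu => hmaps u (lt_abs.2 (.inl (by linarith [mem_Ioi.1 hu]))))
      (Ioi_mem_atTop _) hx.2 ht

end Flow

theorem stmt_12_general
    {M : Type*} [TopologicalSpace M] (ψ : ℝ → M → M)
    (hcont : Continuous fun q : ℝ × M => ψ q.1 q.2)
    (hadd : ∀ s t x, ψ (s + t) x = ψ s (ψ t x))
    (g : M → ℝ) (hg : Continuous g) (hg01 : ∀ x, g x ∈ Set.Icc (0 : ℝ) 1)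
    (ℓ : ℝ)
    (hgate : ∀ x, 0 < g x → g x < 1 → ∀ t : ℝ, ℓ < |t| →
      g (ψ t x) = 0 ∨ g (ψ t x) = 1)
    (hℓ1 : ℓ < 1)
    (x : M) (hx : x ∈ Xset ψ g 0 1) :
    ∃! t : ℝ, pFun ψ g (ψ t x) = 1 / 2 := by
  obtain ⟨c, hlow, hhigh⟩ := exists_step_of_mem_Xset hcont hadd hg hgate hx
  simp only [pFun_flow_eq_fullerSum hadd]
  exact existsUnique_fullerSum_eq_half (continuous_comp_orbit hcont hg x) (fun t => hg01 _) hlow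
    hhigh (by linarith)

/-- assume `ℓ < 1`.  For every `x ∈ X_{0,1}` there exists
exactly one `t ∈ ℝ` with `p(ψ_t(x)) = 1/2`. -/
theorem stmt_12
    {M : Type*} [TopologicalSpace M] (ψ : ℝ → M → M)
    (hcont : Continuous fun q : ℝ × M => ψ q.1 q.2)
    (hzero : ∀ x, ψ 0 x = x)
    (hadd : ∀ s t x, ψ (s + t) x = ψ s (ψ t x))
    (g : M → ℝ) (hg : Continuous g) (hg01 : ∀ x, g x ∈ Set.Icc (0 : ℝ) 1)
    (ℓ : ℝ) (hℓ : 0 < ℓ)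
    (hgate : ∀ x, 0 < g x → g x < 1 → ∀ t : ℝ, ℓ < |t| →
      g (ψ t x) = 0 ∨ g (ψ t x) = 1)
    (hℓ1 : ℓ < 1)
    (x : M) (hx : x ∈ Xset ψ g 0 1) :
    ∃! t : ℝ, pFun ψ g (ψ t x) = 1 / 2 :=
  stmt_12_general ψ hcont hadd g hg hg01 ℓ hgate hℓ1 x hx
end

section
/- Assume ℓ < 1 and that M is compact. Then X_{0,1} ∩ p^{-1}(1/2) is a closed subset of p^{-1}(1/2) (indeed clopen in the subspace topology of p^{-1}(1/2)), and hence X_{0,1} ∩ p^{-1}(1/2) is a compact subset of M. -/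
open Filter Topology

/-
Write `f(t) = g(ψ_t x)`. If `0 < f(s) < 1`, then `f` takes only the values `0, 1` on the two
half-lines `t < s - ℓ` and `t > s + ℓ`, hence is constant on each of them. If `f = 1` after a
negative time, every average `g_n(x)` exceeds `1/2`, so `p(x) > 1/2`; symmetrically, if `f = 0`
before a positive time then `p(x) < 1/2`. Hence on the level set `p = 1/2` a point of `X_{0,1}`
switches from `0` to `1` within the window `[-ℓ, ℓ]`, and since `ℓ < 1` this happens exactly
when `g(ψ_{-2} x) = 0` and `g(ψ_2 x) = 1`, and also exactly when `g(ψ_{-2} x) < 1/2 < g(ψ_2 x)`.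
The first description is a closed condition and the second an open one.
-/

open Set MeasureTheory

lemma hasSum_half_pow_succ : HasSum (fun n : ℕ => (1 / 2 : ℝ) ^ (n + 1)) 1 := by
  simpa [pow_succ'] using hasSum_geometric_two.mul_left (1 / 2 : ℝ)

section

variable {M : Type*} {ψ : ℝ → M → M} {g : M → ℝ} {ℓ : ℝ} {x : M}

lemma orbit_eq_zero_or_eq_one (hadd : ∀ s t x, ψ (s + t) x = ψ s (ψ t x))
    (hgate : ∀ x, 0 < g x → g x < 1 → ∀ t : ℝ, ℓ < |t| →
      g (ψ t x) = 0 ∨ g (ψ t x) = 1)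
    {s t : ℝ} (hs : g (ψ s x) ∈ Ioo 0 1) (ht : ℓ < |t - s|) :
    g (ψ t x) = 0 ∨ g (ψ t x) = 1 := by
  rw [← sub_add_cancel t s, hadd]
  exact hgate _ hs.1 hs.2 _ ht

lemma mem_Xset_zero_one_of_eq {a b : ℝ} (h0 : ∀ t < a, g (ψ t x) = 0)
    (h1 : ∀ t, b < t → g (ψ t x) = 1) : x ∈ Xset ψ g 0 1 :=
  ⟨tendsto_nhds_of_eventually_eq ((eventually_lt_atBot a).mono h0),
    tendsto_nhds_of_eventually_eq ((eventually_gt_atTop b).mono h1)⟩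

variable [TopologicalSpace M]

lemma continuous_orbit (hcont : Continuous fun q : ℝ × M => ψ q.1 q.2) (hg : Continuous g)
    (x : M) : Continuous fun t => g (ψ t x) :=
  hg.comp (hcont.comp (continuous_id.prodMk continuous_const))

lemma continuous_gAvg (hcont : Continuous fun q : ℝ × M => ψ q.1 q.2) (hg : Continuous g)
    (n : ℕ) : Continuous (gAvg ψ g n) :=
  continuous_const.mul (intervalIntegral.continuous_parametric_intervalIntegral_of_continuous'
    (f := fun y t => g (ψ t y)) (hg.comp (hcont.comp (continuous_snd.prodMk continuous_fst))) _ _)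

lemma gAvg_mem_Icc (hcont : Continuous fun q : ℝ × M => ψ q.1 q.2) (hg : Continuous g)
    (hg01 : ∀ x, g x ∈ Icc (0 : ℝ) 1) (n : ℕ) (x : M) :
    gAvg ψ g n x ∈ Icc (0 : ℝ) 1 := by
  have hn : -(n : ℝ) ≤ n := neg_le_self n.cast_nonneg
  have h0 : 0 ≤ ∫ t in (-(n : ℝ))..n, g (ψ t x) :=
    intervalIntegral.integral_nonneg hn fun t _ => (hg01 _).1
  have h1 : ∫ t in (-(n : ℝ))..n, g (ψ t x) ≤ 2 * n :=
    calc ∫ t in (-(n : ℝ))..n, g (ψ t x) ≤ ∫ _ in (-(n : ℝ))..n, (1 : ℝ) :=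
          intervalIntegral.integral_mono_on hn
            ((continuous_orbit hcont hg x).intervalIntegrable _ _) intervalIntegrable_const
            fun t _ => (hg01 _).2
      _ = 2 * n := by simp [two_mul]
  rw [gAvg, one_div_mul_eq_div]
  exact ⟨by positivity, div_le_one_of_le₀ h1 (by positivity)⟩

lemma continuous_pFun (hcont : Continuous fun q : ℝ × M => ψ q.1 q.2) (hg : Continuous g)
    (hg01 : ∀ x, g x ∈ Icc (0 : ℝ) 1) : Continuous (pFun ψ g) := by
  refine continuous_tsum (fun n => continuous_const.mul (continuous_gAvg hcont hg _))
    hasSum_half_pow_succ.summable fun n x => ?_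
  have h := gAvg_mem_Icc hcont hg hg01 (n + 1) x
  rw [norm_mul, Real.norm_of_nonneg (by positivity), Real.norm_of_nonneg h.1]
  exact mul_le_of_le_one_right (by positivity) h.2

lemma summable_pFun (hcont : Continuous fun q : ℝ × M => ψ q.1 q.2) (hg : Continuous g)
    (hg01 : ∀ x, g x ∈ Icc (0 : ℝ) 1) (x : M) :
    Summable fun n : ℕ => (1 / 2 : ℝ) ^ (n + 1) * gAvg ψ g (n + 1) x :=
  hasSum_half_pow_succ.summable.of_nonneg_of_le
    (fun n => mul_nonneg (by positivity) (gAvg_mem_Icc hcont hg hg01 _ x).1)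
    (fun n => mul_le_of_le_one_right (by positivity) (gAvg_mem_Icc hcont hg hg01 _ x).2)

lemma half_lt_pFun (hcont : Continuous fun q : ℝ × M => ψ q.1 q.2) (hg : Continuous g)
    (hg01 : ∀ x, g x ∈ Icc (0 : ℝ) 1) (h : ∀ n ≠ 0, 1 / 2 < gAvg ψ g n x) :
    1 / 2 < pFun ψ g x :=
  calc (1 / 2 : ℝ) = ∑' n : ℕ, (1 / 2 : ℝ) ^ (n + 1) * (1 / 2) := by
        rw [(hasSum_half_pow_succ.mul_right _).tsum_eq, one_mul]
    _ < pFun ψ g x :=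
      Summable.tsum_lt_tsum (i := 0) (fun n => by gcongr; exact (h _ n.succ_ne_zero).le)
        (by gcongr; exact h _ one_ne_zero) (hasSum_half_pow_succ.mul_right _).summable
        (summable_pFun hcont hg hg01 x)

lemma pFun_lt_half (hcont : Continuous fun q : ℝ × M => ψ q.1 q.2) (hg : Continuous g)
    (hg01 : ∀ x, g x ∈ Icc (0 : ℝ) 1) (h : ∀ n ≠ 0, gAvg ψ g n x < 1 / 2) :
    pFun ψ g x < 1 / 2 :=
  calc pFun ψ g x < ∑' n : ℕ, (1 / 2 : ℝ) ^ (n + 1) * (1 / 2) :=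
      Summable.tsum_lt_tsum (i := 0) (fun n => by gcongr; exact (h _ n.succ_ne_zero).le)
        (by gcongr; exact h _ one_ne_zero) (summable_pFun hcont hg hg01 x)
        (hasSum_half_pow_succ.mul_right _).summable
    _ = 1 / 2 := by rw [(hasSum_half_pow_succ.mul_right _).tsum_eq, one_mul]

lemma half_lt_gAvg_of_eq_one (hcont : Continuous fun q : ℝ × M => ψ q.1 q.2)
    (hg : Continuous g) (hg01 : ∀ x, g x ∈ Icc (0 : ℝ) 1) {c : ℝ} (hc : c < 0)
    (h1 : ∀ t, c < t → g (ψ t x) = 1) {n : ℕ} (hn : n ≠ 0) : 1 / 2 < gAvg ψ g n x := by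
  have hN : (0 : ℝ) < n := by positivity
  -- `-n ≤ a` and `c < a < 0`, so `∫_{-n}^{n} ≥ ∫_a^n = n - a > n`.
  set a := max (c / 2) (-n)
  have ha : a < 0 := max_lt (by linarith) (by linarith)
  have h_eq : ∫ t in a..n, g (ψ t x) = n - a := by
    rw [intervalIntegral.integral_congr (g := fun _ => (1 : ℝ)) fun t ht => h1 t ?_]
    · simp
    rw [uIcc_of_le (by linarith)] at ht
    linarith [ht.1, le_max_left (c / 2) (-n)]
  have h_le : ∫ t in a..n, g (ψ t x) ≤ ∫ t in (-(n : ℝ))..n, g (ψ t x) :=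
    intervalIntegral.integral_mono_interval (le_max_right _ _) (by linarith) le_rfl
      (ae_of_all _ fun t => (hg01 _).1) ((continuous_orbit hcont hg x).intervalIntegrable _ _)
  rw [gAvg, one_div_mul_eq_div, lt_div_iff₀ (by positivity)]
  linarith

lemma gAvg_lt_half_of_eq_zero (hcont : Continuous fun q : ℝ × M => ψ q.1 q.2)
    (hg : Continuous g) (hg01 : ∀ x, g x ∈ Icc (0 : ℝ) 1) {c : ℝ} (hc : 0 < c)
    (h0 : ∀ t < c, g (ψ t x) = 0) {n : ℕ} (hn : n ≠ 0) : gAvg ψ g n x < 1 / 2 := by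
  have hN : (0 : ℝ) < n := by positivity
  set b := min (c / 2) n
  have hb : 0 < b := lt_min (by linarith) hN
  have hint := fun u v => (continuous_orbit hcont hg x).intervalIntegrable (μ := volume) u v
  have h_eq : ∫ t in (-(n : ℝ))..b, g (ψ t x) = 0 := by
    rw [intervalIntegral.integral_congr (g := fun _ => (0 : ℝ)) fun t ht => h0 t ?_]
    · simp
    rw [uIcc_of_le (by linarith)] at ht
    linarith [ht.2, min_le_left (c / 2) (n : ℝ)]
  have h_le : ∫ t in b..n, g (ψ t x) ≤ n - b :=
    calc ∫ t in b..n, g (ψ t x) ≤ ∫ _ in b..n, (1 : ℝ) :=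
          intervalIntegral.integral_mono_on (min_le_right _ _) (hint _ _)
            intervalIntegrable_const fun t _ => (hg01 _).2
      _ = n - b := by simp
  rw [gAvg, one_div_mul_eq_div, div_lt_iff₀ (by positivity),
    ← intervalIntegral.integral_add_adjacent_intervals (hint _ b) (hint b _)]
  linarith

lemma nonneg_of_pFun_eq_half_of_eq_one (hcont : Continuous fun q : ℝ × M => ψ q.1 q.2)
    (hg : Continuous g) (hg01 : ∀ x, g x ∈ Icc (0 : ℝ) 1) (hp : pFun ψ g x = 1 / 2)
    {c : ℝ} (h1 : ∀ t, c < t → g (ψ t x) = 1) : 0 ≤ c := by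
  by_contra! hc
  exact (half_lt_pFun hcont hg hg01 fun n hn =>
    half_lt_gAvg_of_eq_one hcont hg hg01 hc h1 hn).ne' hp

lemma nonpos_of_pFun_eq_half_of_eq_zero (hcont : Continuous fun q : ℝ × M => ψ q.1 q.2)
    (hg : Continuous g) (hg01 : ∀ x, g x ∈ Icc (0 : ℝ) 1) (hp : pFun ψ g x = 1 / 2)
    {c : ℝ} (h0 : ∀ t < c, g (ψ t x) = 0) : c ≤ 0 := by
  by_contra! hc
  exact (pFun_lt_half hcont hg hg01 fun n hn =>
    gAvg_lt_half_of_eq_zero hcont hg hg01 hc h0 hn).ne hp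

lemma orbit_profile (hcont : Continuous fun q : ℝ × M => ψ q.1 q.2)
    (hadd : ∀ s t x, ψ (s + t) x = ψ s (ψ t x)) (hg : Continuous g)
    (hgate : ∀ x, 0 < g x → g x < 1 → ∀ t : ℝ, ℓ < |t| →
      g (ψ t x) = 0 ∨ g (ψ t x) = 1)
    {s : ℝ} (hs : g (ψ s x) ∈ Ioo 0 1) :
    ∃ i j : ℝ, (i = 0 ∨ i = 1) ∧ (j = 0 ∨ j = 1) ∧
      (∀ t < s - ℓ, g (ψ t x) = i) ∧ ∀ t, s + ℓ < t → g (ψ t x) = j := by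
  have hf := continuous_orbit hcont hg x
  have hdisc : IsDiscrete ({0, 1} : Set ℝ) := (toFinite _).isDiscrete
  have hL : MapsTo (fun t => g (ψ t x)) (Iio (s - ℓ)) {0, 1} := fun t (ht : t < s - ℓ) =>
    orbit_eq_zero_or_eq_one hadd hgate hs (lt_abs.2 (.inr (by linarith)))
  have hR : MapsTo (fun t => g (ψ t x)) (Ioi (s + ℓ)) {0, 1} := fun t (ht : s + ℓ < t) =>
    orbit_eq_zero_or_eq_one hadd hgate hs (lt_abs.2 (.inl (by linarith)))
  have hl : s - ℓ - 1 ∈ Iio (s - ℓ) := by simp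
  have hr : s + ℓ + 1 ∈ Ioi (s + ℓ) := by simp
  exact ⟨_, _, hL hl, hR hr,
    fun t ht => isPreconnected_Iio.constant_of_mapsTo hdisc hf.continuousOn hL ht hl,
    fun t ht => isPreconnected_Ioi.constant_of_mapsTo hdisc hf.continuousOn hR ht hr⟩

lemma exists_switch_of_mem_Xset (hcont : Continuous fun q : ℝ × M => ψ q.1 q.2)
    (hadd : ∀ s t x, ψ (s + t) x = ψ s (ψ t x)) (hg : Continuous g)
    (hgate : ∀ x, 0 < g x → g x < 1 → ∀ t : ℝ, ℓ < |t| →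
      g (ψ t x) = 0 ∨ g (ψ t x) = 1)
    (hx : x ∈ Xset ψ g 0 1) :
    ∃ s, (∀ t < s - ℓ, g (ψ t x) = 0) ∧ ∀ t, s + ℓ < t → g (ψ t x) = 1 := by
  obtain ⟨hbot, htop⟩ := hx
  obtain ⟨t₀, ht₀⟩ := (hbot.eventually_lt_const (by norm_num : (0 : ℝ) < 1 / 2)).exists
  obtain ⟨t₁, ht₁⟩ := (htop.eventually_const_lt (by norm_num : (1 / 2 : ℝ) < 1)).exists
  obtain ⟨s, -, hs : g (ψ s x) = 1 / 2⟩ :=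
    intermediate_value_uIcc (continuous_orbit hcont hg x).continuousOn
      (mem_uIcc.2 (.inl ⟨ht₀.le, ht₁.le⟩))
  obtain ⟨i, j, -, -, hi, hj⟩ :=
    orbit_profile hcont hadd hg hgate (show g (ψ s x) ∈ Ioo 0 1 by rw [hs]; norm_num)
  obtain rfl : i = 0 :=
    tendsto_nhds_unique (tendsto_nhds_of_eventually_eq ((eventually_lt_atBot _).mono hi)) hbot
  obtain rfl : j = 1 :=
    tendsto_nhds_unique (tendsto_nhds_of_eventually_eq ((eventually_gt_atTop _).mono hj)) htop
  exact ⟨s, hi, hj⟩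

lemma exists_switch_of_lt_half_lt (hcont : Continuous fun q : ℝ × M => ψ q.1 q.2)
    (hadd : ∀ s t x, ψ (s + t) x = ψ s (ψ t x)) (hg : Continuous g)
    (hg01 : ∀ x, g x ∈ Icc (0 : ℝ) 1)
    (hgate : ∀ x, 0 < g x → g x < 1 → ∀ t : ℝ, ℓ < |t| →
      g (ψ t x) = 0 ∨ g (ψ t x) = 1)
    (hℓ1 : ℓ < 1) (hp : pFun ψ g x = 1 / 2) (hneg : g (ψ (-2) x) < 1 / 2)
    (hpos : 1 / 2 < g (ψ 2 x)) :
    ∃ s, (∀ t < s - ℓ, g (ψ t x) = 0) ∧ ∀ t, s + ℓ < t → g (ψ t x) = 1 := by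
  obtain ⟨s, -, hs : g (ψ s x) = 1 / 2⟩ :=
    intermediate_value_uIcc (continuous_orbit hcont hg x).continuousOn
      (mem_uIcc.2 (.inl ⟨hneg.le, hpos.le⟩))
  obtain ⟨i, j, hi01, hj01, hi, hj⟩ :=
    orbit_profile hcont hadd hg hgate (show g (ψ s x) ∈ Ioo 0 1 by rw [hs]; norm_num)
  have hleft : (i = 0 ∧ s - ℓ ≤ 0) ∨ s - ℓ ≤ -2 := by
    rcases hi01 with rfl | rfl
    · exact .inl ⟨rfl, nonpos_of_pFun_eq_half_of_eq_zero hcont hg hg01 hp hi⟩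
    · exact .inr (not_lt.1 fun h => by linarith [hi _ h])
  have hright : (j = 1 ∧ 0 ≤ s + ℓ) ∨ 2 ≤ s + ℓ := by
    rcases hj01 with rfl | rfl
    · exact .inr (not_lt.1 fun h => by linarith [hj _ h])
    · exact .inl ⟨rfl, nonneg_of_pFun_eq_half_of_eq_one hcont hg hg01 hp hj⟩
  rcases hleft with ⟨rfl, hl⟩ | hl <;> rcases hright with ⟨rfl, hr⟩ | hr
  · exact ⟨s, hi, hj⟩
  all_goals linarith

lemma mem_Xset_zero_one_iff (hcont : Continuous fun q : ℝ × M => ψ q.1 q.2)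
    (hadd : ∀ s t x, ψ (s + t) x = ψ s (ψ t x)) (hg : Continuous g)
    (hg01 : ∀ x, g x ∈ Icc (0 : ℝ) 1)
    (hgate : ∀ x, 0 < g x → g x < 1 → ∀ t : ℝ, ℓ < |t| →
      g (ψ t x) = 0 ∨ g (ψ t x) = 1)
    (hℓ1 : ℓ < 1) (hp : pFun ψ g x = 1 / 2) :
    x ∈ Xset ψ g 0 1 ↔ g (ψ (-2) x) = 0 ∧ g (ψ 2 x) = 1 := by
  refine ⟨fun hx => ?_, fun h => ?_⟩
  · obtain ⟨s, h0, h1⟩ := exists_switch_of_mem_Xset hcont hadd hg hgate hx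
    have hl := nonpos_of_pFun_eq_half_of_eq_zero hcont hg hg01 hp h0
    have hr := nonneg_of_pFun_eq_half_of_eq_one hcont hg hg01 hp h1
    exact ⟨h0 _ (by linarith), h1 _ (by linarith)⟩
  · obtain ⟨s, h0, h1⟩ := exists_switch_of_lt_half_lt hcont hadd hg hg01 hgate hℓ1 hp
      (by rw [h.1]; norm_num) (by rw [h.2]; norm_num)
    exact mem_Xset_zero_one_of_eq h0 h1

lemma mem_Xset_zero_one_iff_lt_half_lt (hcont : Continuous fun q : ℝ × M => ψ q.1 q.2)
    (hadd : ∀ s t x, ψ (s + t) x = ψ s (ψ t x)) (hg : Continuous g)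
    (hg01 : ∀ x, g x ∈ Icc (0 : ℝ) 1)
    (hgate : ∀ x, 0 < g x → g x < 1 → ∀ t : ℝ, ℓ < |t| →
      g (ψ t x) = 0 ∨ g (ψ t x) = 1)
    (hℓ1 : ℓ < 1) (hp : pFun ψ g x = 1 / 2) :
    x ∈ Xset ψ g 0 1 ↔ g (ψ (-2) x) < 1 / 2 ∧ 1 / 2 < g (ψ 2 x) := by
  refine ⟨fun hx => ?_, fun h => ?_⟩
  · obtain ⟨h0, h1⟩ := (mem_Xset_zero_one_iff hcont hadd hg hg01 hgate hℓ1 hp).1 hx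
    rw [h0, h1]
    norm_num
  · obtain ⟨s, h0, h1⟩ := exists_switch_of_lt_half_lt hcont hadd hg hg01 hgate hℓ1 hp h.1 h.2
    exact mem_Xset_zero_one_of_eq h0 h1

end

theorem stmt_15_general
    {M : Type*} [TopologicalSpace M] (ψ : ℝ → M → M)
    (hcont : Continuous fun q : ℝ × M => ψ q.1 q.2)
    (hadd : ∀ s t x, ψ (s + t) x = ψ s (ψ t x))
    (g : M → ℝ) (hg : Continuous g) (hg01 : ∀ x, g x ∈ Set.Icc (0 : ℝ) 1)
    (ℓ : ℝ)
    (hgate : ∀ x, 0 < g x → g x < 1 → ∀ t : ℝ, ℓ < |t| →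
      g (ψ t x) = 0 ∨ g (ψ t x) = 1)
    (hℓ1 : ℓ < 1) (hM : CompactSpace M) :
    IsClosed {y : pFun ψ g ⁻¹' {(1 / 2 : ℝ)} | (y : M) ∈ Xset ψ g 0 1} ∧
    IsOpen {y : pFun ψ g ⁻¹' {(1 / 2 : ℝ)} | (y : M) ∈ Xset ψ g 0 1} ∧
    IsCompact (Xset ψ g 0 1 ∩ pFun ψ g ⁻¹' {(1 / 2 : ℝ)}) := by
  set P := pFun ψ g ⁻¹' {(1 / 2 : ℝ)}
  have hP : IsClosed P := isClosed_singleton.preimage (continuous_pFun hcont hg hg01)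
  have hgψ : ∀ t : ℝ, Continuous fun y : P => g (ψ t y) := fun t =>
    (hg.comp (hcont.comp (Continuous.prodMk_right t))).comp continuous_subtype_val
  have hclosed : IsClosed {y : P | (y : M) ∈ Xset ψ g 0 1} := by
    rw [show {y : P | (y : M) ∈ Xset ψ g 0 1} =
        {y : P | g (ψ (-2) y) = 0 ∧ g (ψ 2 y) = 1} from
      Set.ext fun y => mem_Xset_zero_one_iff hcont hadd hg hg01 hgate hℓ1 y.2, ofPred_and]
    exact (isClosed_eq (hgψ _) continuous_const).inter (isClosed_eq (hgψ _) continuous_const)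
  have hopen : IsOpen {y : P | (y : M) ∈ Xset ψ g 0 1} := by
    rw [show {y : P | (y : M) ∈ Xset ψ g 0 1} =
        {y : P | g (ψ (-2) y) < 1 / 2 ∧ 1 / 2 < g (ψ 2 y)} from
      Set.ext fun y => mem_Xset_zero_one_iff_lt_half_lt hcont hadd hg hg01 hgate hℓ1 y.2,
      ofPred_and]
    exact (isOpen_lt (hgψ _) continuous_const).inter (isOpen_lt continuous_const (hgψ _))
  refine ⟨hclosed, hopen, ?_⟩
  have h : IsClosed (Subtype.val '' (Subtype.val ⁻¹' Xset ψ g 0 1 : Set P)) := hclosed.trans hP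
  rw [Subtype.image_preimage_coe, inter_comm] at h
  exact h.isCompact

/-- assume `ℓ < 1` and `M` compact.  Then
`X_{0,1} ∩ p⁻¹(1/2)` is closed (indeed clopen) in the subspace topology of
`p⁻¹(1/2)`, and is a compact subset of `M`. -/
theorem stmt_15
    {M : Type*} [TopologicalSpace M] (ψ : ℝ → M → M)
    (hcont : Continuous fun q : ℝ × M => ψ q.1 q.2)
    (hzero : ∀ x, ψ 0 x = x)
    (hadd : ∀ s t x, ψ (s + t) x = ψ s (ψ t x))
    (g : M → ℝ) (hg : Continuous g) (hg01 : ∀ x, g x ∈ Set.Icc (0 : ℝ) 1)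
    (ℓ : ℝ) (hℓ : 0 < ℓ)
    (hgate : ∀ x, 0 < g x → g x < 1 → ∀ t : ℝ, ℓ < |t| →
      g (ψ t x) = 0 ∨ g (ψ t x) = 1)
    (hℓ1 : ℓ < 1) (hM : CompactSpace M) :
    IsClosed {y : pFun ψ g ⁻¹' {(1 / 2 : ℝ)} | (y : M) ∈ Xset ψ g 0 1} ∧
    IsOpen {y : pFun ψ g ⁻¹' {(1 / 2 : ℝ)} | (y : M) ∈ Xset ψ g 0 1} ∧
    IsCompact (Xset ψ g 0 1 ∩ pFun ψ g ⁻¹' {(1 / 2 : ℝ)}) :=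
  stmt_15_general ψ hcont hadd g hg hg01 ℓ hgate hℓ1 hM
end
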